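/- Let G be a simple graph on n vertices, let p be a prime, and let α be an integer column vector of length n such that W̃_Q(G)ᵀα ≡ 0 (mod p) entrywise. Then W̃_Q(G∘P₂)ᵀ(α, 0)ᵀ ≡ 0 (mod p) and W̃_Q(G∘P₂)ᵀ(0, α)ᵀ ≡ 0 (mod p), where (α,0)ᵀ and (0,α)ᵀ are the length-2n vectors whose two blocks are α and 0 (resp. 0 and α). -/

import Mathlib

open Matrix Polynomial BigOperators

/-- The signless Laplacian matrix `Q(G) = D(G) + A(G)` of a simple graph. -/
noncomputable def qMat (R : Type) [Ring R] {V : Type} [Fintype V] [DecidableEq V]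
    (G : SimpleGraph V) : Matrix V V R :=
  letI := Classical.decRel G.Adj
  G.degMatrix R + G.adjMatrix R

/-- The determinant of the Q-walk matrix `[e, Qe, …, Q^{m-1}e]` of a graph
(rows indexed by vertices via a fixed enumeration; well defined up to sign). -/
noncomputable def qWalkDet {V : Type} [Fintype V] [DecidableEq V] (G : SimpleGraph V) : ℝ :=
  Matrix.det (Matrix.of fun i j : Fin (Fintype.card V) =>
    ((qMat ℝ G ^ (j : ℕ)) *ᵥ (fun _ => (1 : ℝ))) ((Fintype.equivFin V).symm i))

/-- The rooted product `G ∘ P_k`: a pendant path on `k-1` extra vertices attached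
at each vertex of `G`; level `0` is the copy of `G`. -/
def rootedProd {V : Type} (G : SimpleGraph V) (k : ℕ) : SimpleGraph (V × Fin k) :=
  SimpleGraph.fromRel (fun a b =>
    (a.2 = b.2 ∧ (a.2 : ℕ) = 0 ∧ G.Adj a.1 b.1) ∨ (a.1 = b.1 ∧ (a.2 : ℕ) + 1 = (b.2 : ℕ)))

/-- A graph is determined by its generalized Q-spectrum. -/
def IsDGQS {V : Type} [Fintype V] [DecidableEq V] (G : SimpleGraph V) : Prop :=
  ∀ H : SimpleGraph V,
    (qMat ℝ H).charpoly = (qMat ℝ G).charpoly →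
    (qMat ℝ Hᶜ).charpoly = (qMat ℝ Gᶜ).charpoly →
    Nonempty (H ≃g G)


/-- The modified Q-walk matrix `W̃_Q = [e, Qe/2, Q²e/2, …, Q^{m-1}e/2]` (an integer
matrix: for `j ≥ 1` one has `Q^j e / 2 = Q^{j-1} d`, where `d` is the degree vector). -/
noncomputable def qWalkMod {V : Type} [Fintype V] [DecidableEq V] (G : SimpleGraph V) :
    Matrix V (Fin (Fintype.card V)) ℤ :=
  Matrix.of fun i j =>
    if (j : ℕ) = 0 then 1
    else ((qMat ℤ G ^ ((j : ℕ) - 1)) *ᵥ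
      (fun v => letI := Classical.decRel G.Adj; (G.degree v : ℤ))) i

/-!
Write `Q = Q(G)`, `e` for the all-ones vector and `d = Qe/2` for the degree vector, so that the
columns of `W̃_Q(G)` are `e, d, Qd, …, Q^{n-2}d`. The hypothesis says `p ∣ eᵀα` and `p ∣ dᵀQⁱα`
for `i ≤ n - 2`. Since `eᵀQ^{i+1}α = 2 dᵀQⁱα`, Cayley–Hamilton gives `p ∣ eᵀQᵏα` for every `k`.
For odd `p` this yields `p ∣ dᵀQᵏα` for every `k`; for `p = 2` one uses instead that
`xᵀx ≡ eᵀx` and `xᵀQx ≡ dᵀx (mod 2)`, which make `αᵀQⁱα` even for `i < n`, hence for all `i`,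
and `dᵀQᵏα ≡ αᵀQ^{2k+1}α`. So the property "`p ∣ xᵀQᵏα` for all `k`" holds for `e` and `d` and
is preserved by sums and by `Q`. As `Q(G∘P₂) = [[Q+I, I], [I, I]]` and the degree vector of
`G∘P₂` is `(d+e, e)`, both blocks of every column of `W̃_Q(G∘P₂)` are built from `e` and `d` by
these operations.
-/

namespace Matrix

variable {R n : Type*} [Fintype n]

section CommRing

variable [CommRing R] [DecidableEq n]

theorem pow_mem_span_pow_lt_card [Nontrivial R] (M : Matrix n n R) (k : ℕ) :
    M ^ k ∈ Submodule.span R ((M ^ ·) '' Set.Iio (Fintype.card n)) := by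
  classical
  have hr : X ^ k %ₘ M.charpoly ∈ degreeLT R (Fintype.card n) := by
    rw [mem_degreeLT, ← M.charpoly_degree_eq_dim]
    exact degree_modByMonic_lt _ M.charpoly_monic
  rw [degreeLT_eq_span_X_pow] at hr
  rw [pow_eq_aeval_mod_charpoly]
  generalize X ^ k %ₘ M.charpoly = r at hr ⊢
  induction hr using Submodule.span_induction with
  | mem q hq =>
    obtain ⟨i, hi, rfl⟩ := by simpa using hq
    exact Submodule.subset_span ⟨i, hi, by simp⟩
  | zero => simp
  | add q r _ _ hq hr => rw [map_add]; exact add_mem hq hr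
  | smul c q _ hq => rw [map_smul]; exact Submodule.smul_mem _ c hq

theorem dvd_dotProduct_pow_mulVec_of_forall_lt_card [Nontrivial R] (M : Matrix n n R) (a : R)
    (w v : n → R) (h : ∀ i < Fintype.card n, a ∣ w ⬝ᵥ (M ^ i *ᵥ v)) (k : ℕ) :
    a ∣ w ⬝ᵥ (M ^ k *ᵥ v) := by
  have hmem := M.pow_mem_span_pow_lt_card k
  generalize M ^ k = A at hmem ⊢
  induction hmem using Submodule.span_induction with
  | mem _ hA => obtain ⟨i, hi, rfl⟩ := hA; exact h i hi
  | zero => simp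
  | add A B _ _ hA hB => rw [add_mulVec, dotProduct_add]; exact dvd_add hA hB
  | smul c A _ hA => rw [smul_mulVec, dotProduct_smul, smul_eq_mul]; exact hA.mul_left c

end CommRing

theorem IsSymm.mulVec_dotProduct [CommSemiring R] {A : Matrix n n R} (hA : A.IsSymm)
    (x y : n → R) : (A *ᵥ x) ⬝ᵥ y = x ⬝ᵥ (A *ᵥ y) := by
  rw [dotProduct_mulVec, ← mulVec_transpose, hA.eq]

theorem dotProduct_ite_snd_eq {V ι : Type*} [Semiring R] [Fintype V] [Fintype ι] [DecidableEq ι]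
    (z : V × ι → R) (i : ι) (α : V → R) :
    z ⬝ᵥ (fun v => if v.2 = i then α v.1 else 0) = (fun u => z (u, i)) ⬝ᵥ α := by
  simp [dotProduct, Fintype.sum_prod_type]

end Matrix

theorem Int.two_dvd_sum_sum_of_symm {ι : Type*} [Fintype ι] (f : ι → ι → ℤ)
    (hsymm : ∀ i j, f i j = f j i) (hdiag : ∀ i, f i i = 0) : 2 ∣ ∑ i, ∑ j, f i j := by
  refine (ZMod.intCast_zmod_eq_zero_iff_dvd _ 2).mp ?_
  rw [← Finset.sum_product', Int.cast_sum]
  refine Finset.sum_ninvolution Prod.swap (fun a => ?_) (fun a ha hswap => ?_) (by simp) (by simp)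
  · rw [Prod.fst_swap, Prod.snd_swap, hsymm a.2, CharTwo.add_self_eq_zero]
  · obtain ⟨i, j⟩ := a
    obtain rfl : j = i := congrArg Prod.fst hswap
    simp [hdiag] at ha

theorem Int.two_dvd_mul_self_sub_self (a : ℤ) : 2 ∣ a * a - a := by
  rw [← mul_sub_one]
  exact (Int.even_mul_pred_self a).two_dvd

theorem Int.two_dvd_dotProduct_self_sub {ι : Type*} [Fintype ι] (x : ι → ℤ) :
    2 ∣ x ⬝ᵥ x - 1 ⬝ᵥ x := by
  rw [one_dotProduct, dotProduct, ← Finset.sum_sub_distrib]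
  exact Finset.dvd_sum fun i _ => Int.two_dvd_mul_self_sub_self (x i)

section SignlessLaplacian

open SimpleGraph

variable {V : Type} [Fintype V] [DecidableEq V] (G : SimpleGraph V) [DecidableRel G.Adj]

def degVec : V → ℤ := fun v => G.degree v

theorem qMat_eq_degMatrix_add_adjMatrix (R : Type) [Ring R] :
    qMat R G = G.degMatrix R + G.adjMatrix R := by
  rw [qMat, Subsingleton.elim (Classical.decRel G.Adj) ‹_›]

theorem qMat_apply (R : Type) [Ring R] (u v : V) :
    qMat R G u v = (if u = v then (G.degree u : R) else 0) + if G.Adj u v then 1 else 0 := by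
  simp [qMat_eq_degMatrix_add_adjMatrix, degMatrix, diagonal_apply, adjMatrix_apply]

theorem isSymm_qMat (R : Type) [Ring R] : (qMat R G).IsSymm := by
  rw [qMat_eq_degMatrix_add_adjMatrix]
  exact (G.isSymm_degMatrix R).add G.isSymm_adjMatrix

theorem qMat_mulVec_one : qMat ℤ G *ᵥ 1 = 2 • degVec G := by
  ext v
  simp [qMat_eq_degMatrix_add_adjMatrix, add_mulVec, degMatrix_mulVec_apply, degVec, two_mul]

theorem one_dotProduct_qMat_pow_succ_mulVec (k : ℕ) (x : V → ℤ) :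
    1 ⬝ᵥ (qMat ℤ G ^ (k + 1) *ᵥ x) = 2 * (degVec G ⬝ᵥ (qMat ℤ G ^ k *ᵥ x)) := by
  rw [pow_succ', ← mulVec_mulVec, ← (isSymm_qMat G ℤ).mulVec_dotProduct, qMat_mulVec_one,
    smul_dotProduct, nsmul_eq_mul, Nat.cast_ofNat]

theorem two_dvd_dotProduct_qMat_mulVec_self_sub (x : V → ℤ) :
    2 ∣ x ⬝ᵥ (qMat ℤ G *ᵥ x) - degVec G ⬝ᵥ x := by
  have hsplit : x ⬝ᵥ (qMat ℤ G *ᵥ x) - degVec G ⬝ᵥ x =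
      ∑ v, G.degree v * (x v * x v - x v) +
        ∑ u, ∑ v, if G.Adj u v then x u * x v else 0 := by
    rw [qMat_eq_degMatrix_add_adjMatrix, add_mulVec, dotProduct_add, dotProduct_mulVec_degMatrix,
      dotProduct_mulVec_adjMatrix]
    simp only [degVec, dotProduct, mul_sub, Finset.sum_sub_distrib]
    ring_nf
  rw [hsplit]
  refine dvd_add (Finset.dvd_sum fun v _ => (Int.two_dvd_mul_self_sub_self _).mul_left _) ?_
  refine Int.two_dvd_sum_sum_of_symm _ (fun u v => ?_) (fun u => by simp)
  simp only [G.adj_comm u v, mul_comm]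

/-- Column `j` of `W̃_Q(G)`, defined for every `j : ℕ`, not only for `j < |V|`. -/
noncomputable def qWalkVec : ℕ → V → ℤ
  | 0 => 1
  | j + 1 => qMat ℤ G ^ j *ᵥ degVec G

theorem qWalkMod_transpose_mulVec (β : V → ℤ) :
    (qWalkMod G)ᵀ *ᵥ β = fun j : Fin _ => qWalkVec G j ⬝ᵥ β := by
  ext ⟨j, hj⟩
  rw [qWalkMod, Subsingleton.elim (Classical.decRel G.Adj) ‹_›]
  cases j <;> rfl

theorem qMat_pow_mulVec_dotProduct (k : ℕ) (x y : V → ℤ) :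
    (qMat ℤ G ^ k *ᵥ x) ⬝ᵥ y = x ⬝ᵥ (qMat ℤ G ^ k *ᵥ y) :=
  ((isSymm_qMat G ℤ).pow k).mulVec_dotProduct x y

variable {G} {α : V → ℤ}

theorem dvd_one_dotProduct_qMat_pow_mulVec {a : ℤ}
    (hα : ∀ j < Fintype.card V, a ∣ qWalkVec G j ⬝ᵥ α) (k : ℕ) :
    a ∣ 1 ⬝ᵥ (qMat ℤ G ^ k *ᵥ α) := by
  refine Matrix.dvd_dotProduct_pow_mulVec_of_forall_lt_card _ _ _ _ (fun i hi => ?_) k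
  cases i with
  | zero => simpa [qWalkVec] using hα 0 hi
  | succ j =>
    rw [one_dotProduct_qMat_pow_succ_mulVec, ← qMat_pow_mulVec_dotProduct]
    exact (hα (j + 1) hi).mul_left 2

theorem two_dvd_dotProduct_qMat_pow_mulVec_self
    (hα : ∀ j < Fintype.card V, 2 ∣ qWalkVec G j ⬝ᵥ α) (k : ℕ) :
    2 ∣ α ⬝ᵥ (qMat ℤ G ^ k *ᵥ α) := by
  refine Matrix.dvd_dotProduct_pow_mulVec_of_forall_lt_card _ _ _ _ (fun i hi => ?_) k
  obtain ⟨t, rfl | rfl⟩ := Nat.even_or_odd' i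
  · have hsq : α ⬝ᵥ (qMat ℤ G ^ (2 * t) *ᵥ α) =
        (qMat ℤ G ^ t *ᵥ α) ⬝ᵥ (qMat ℤ G ^ t *ᵥ α) := by
      rw [two_mul, pow_add, ← mulVec_mulVec, qMat_pow_mulVec_dotProduct]
    rw [hsq]
    exact (dvd_sub_left (dvd_one_dotProduct_qMat_pow_mulVec hα t)).mp
      (Int.two_dvd_dotProduct_self_sub _)
  · have hquad : α ⬝ᵥ (qMat ℤ G ^ (2 * t + 1) *ᵥ α) =
        (qMat ℤ G ^ t *ᵥ α) ⬝ᵥ (qMat ℤ G *ᵥ (qMat ℤ G ^ t *ᵥ α)) := by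
      rw [qMat_pow_mulVec_dotProduct, mulVec_mulVec, mulVec_mulVec, ← pow_succ, ← pow_add,
        two_mul, add_right_comm]
    have hdeg : 2 ∣ degVec G ⬝ᵥ (qMat ℤ G ^ t *ᵥ α) := by
      rw [← qMat_pow_mulVec_dotProduct]
      exact hα (t + 1) (by omega)
    rw [hquad]
    exact (dvd_sub_left hdeg).mp (two_dvd_dotProduct_qMat_mulVec_self_sub G _)

theorem dvd_degVec_dotProduct_qMat_pow_mulVec {p : ℕ} (hp : p.Prime)
    (hα : ∀ j < Fintype.card V, (p : ℤ) ∣ qWalkVec G j ⬝ᵥ α) (k : ℕ) :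
    (p : ℤ) ∣ degVec G ⬝ᵥ (qMat ℤ G ^ k *ᵥ α) := by
  rcases hp.eq_two_or_odd' with rfl | hodd
  -- For `p = 2` the identity `eᵀQ^{k+1}α = 2 dᵀQᵏα` says nothing; use `dᵀx ≡ xᵀQx (mod 2)`.
  · have hquad : 2 ∣ (qMat ℤ G ^ k *ᵥ α) ⬝ᵥ (qMat ℤ G *ᵥ (qMat ℤ G ^ k *ᵥ α)) := by
      rw [qMat_pow_mulVec_dotProduct, mulVec_mulVec, mulVec_mulVec, ← pow_succ, ← pow_add]
      exact two_dvd_dotProduct_qMat_pow_mulVec_self hα _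
    exact (dvd_sub_right hquad).mp (two_dvd_dotProduct_qMat_mulVec_self_sub G _)
  · have h2 : (p : ℤ) ∣ 2 * (degVec G ⬝ᵥ (qMat ℤ G ^ k *ᵥ α)) := by
      rw [← one_dotProduct_qMat_pow_succ_mulVec]
      exact dvd_one_dotProduct_qMat_pow_mulVec hα (k + 1)
    exact (Nat.isCoprime_iff_coprime.mpr (Nat.coprime_two_right.mpr hodd)).dvd_of_dvd_mul_left h2

end SignlessLaplacian

section RootedProduct

open SimpleGraph

variable {V : Type} (G : SimpleGraph V)

theorem rootedProd_two_adj (u v : V) (i j : Fin 2) :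
    (rootedProd G 2).Adj (u, i) (v, j) ↔ (i = 0 ∧ j = 0 ∧ G.Adj u v) ∨ (u = v ∧ i ≠ j) := by
  rw [rootedProd, fromRel_adj]
  fin_cases i <;> fin_cases j <;> simp [Prod.ext_iff, G.adj_comm, eq_comm]
  exact Adj.ne

variable [Fintype V] [DecidableEq V] [DecidableRel G.Adj] [DecidableRel (rootedProd G 2).Adj]

theorem degVec_rootedProd_two (u : V) (i : Fin 2) :
    degVec (rootedProd G 2) (u, i) = if i = 0 then degVec G u + 1 else 1 := by
  rw [degVec, degree_eq_sum_if_adj, Fintype.sum_prod_type]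
  simp only [Fin.sum_univ_two, rootedProd_two_adj]
  fin_cases i <;>
    simp [Finset.sum_add_distrib, degVec, SimpleGraph.degree, neighborFinset_eq_filter]

theorem qMat_rootedProd_two_apply (u v : V) (i j : Fin 2) :
    qMat ℤ (rootedProd G 2) (u, i) (v, j) =
      (if i = 0 ∧ j = 0 then qMat ℤ G u v else 0) + if u = v then 1 else 0 := by
  rw [qMat_apply, qMat_apply, ← degVec, degVec_rootedProd_two]
  by_cases huv : u = v
  · subst huv
    fin_cases i <;> fin_cases j <;> simp [rootedProd_two_adj, degVec]
  · fin_cases i <;> fin_cases j <;> simp [rootedProd_two_adj, huv]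

theorem qMat_rootedProd_two_mulVec_apply_zero (z : V × Fin 2 → ℤ) (u : V) :
    (qMat ℤ (rootedProd G 2) *ᵥ z) (u, 0) =
      (qMat ℤ G *ᵥ fun v => z (v, 0)) u + z (u, 0) + z (u, 1) := by
  simp [mulVec, dotProduct, Fintype.sum_prod_type, qMat_rootedProd_two_apply, add_mul,
    Finset.sum_add_distrib, add_assoc]

theorem qMat_rootedProd_two_mulVec_apply_one (z : V × Fin 2 → ℤ) (u : V) :
    (qMat ℤ (rootedProd G 2) *ᵥ z) (u, 1) = z (u, 0) + z (u, 1) := by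
  simp [mulVec, dotProduct, Fintype.sum_prod_type, qMat_rootedProd_two_apply]

end RootedProduct

section RootedProductWalk

variable {V : Type} [Fintype V] [DecidableEq V] {G : SimpleGraph V} [DecidableRel G.Adj]
  [DecidableRel (rootedProd G 2).Adj]

theorem qWalkVec_rootedProd_two_slice (P : (V → ℤ) → Prop)
    (hadd : ∀ x y, P x → P y → P (x + y)) (hmulVec : ∀ x, P x → P (qMat ℤ G *ᵥ x))
    (hone : P 1) (hdeg : P (degVec G)) (j : ℕ) (i : Fin 2) :
    P fun u => qWalkVec (rootedProd G 2) j (u, i) := by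
  cases j with
  | zero => exact hone
  | succ k =>
    induction k generalizing i with
    | zero =>
      fin_cases i
      · convert hadd _ _ hdeg hone using 1
        ext u
        simp [qWalkVec, degVec_rootedProd_two]
      · convert hone using 1
        ext u
        simp [qWalkVec, degVec_rootedProd_two]
    | succ k ih =>
      have hstep : qWalkVec (rootedProd G 2) (k + 2) =
          qMat ℤ (rootedProd G 2) *ᵥ qWalkVec (rootedProd G 2) (k + 1) := by
        simp only [qWalkVec, pow_succ', mulVec_mulVec]
      fin_cases i
      · convert hadd _ _ (hadd _ _ (hmulVec _ (ih 0)) (ih 0)) (ih 1) using 1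
        ext u
        simp [hstep, qMat_rootedProd_two_mulVec_apply_zero]
      · convert hadd _ _ (ih 0) (ih 1) using 1
        ext u
        simp [hstep, qMat_rootedProd_two_mulVec_apply_one]

theorem dvd_qWalkVec_rootedProd_two_slice_dotProduct {p : ℕ} (hp : p.Prime) {α : V → ℤ}
    (hα : ∀ j < Fintype.card V, (p : ℤ) ∣ qWalkVec G j ⬝ᵥ α) (j : ℕ) (i : Fin 2) :
    (p : ℤ) ∣ (fun u => qWalkVec (rootedProd G 2) j (u, i)) ⬝ᵥ α := by
  simpa using qWalkVec_rootedProd_two_slice (fun x => ∀ k, (p : ℤ) ∣ x ⬝ᵥ (qMat ℤ G ^ k *ᵥ α))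
    (fun x y hx hy k => by rw [add_dotProduct]; exact dvd_add (hx k) (hy k))
    (fun x hx k => by
      rw [(isSymm_qMat G ℤ).mulVec_dotProduct, mulVec_mulVec, ← pow_succ']; exact hx (k + 1))
    (dvd_one_dotProduct_qMat_pow_mulVec hα) (dvd_degVec_dotProduct_qMat_pow_mulVec hp hα) j i 0

end RootedProductWalk

/-- If `W̃_Q(G)ᵀ α ≡ 0 (mod p)`, then
`W̃_Q(G∘P₂)ᵀ (α,0)ᵀ ≡ 0` and `W̃_Q(G∘P₂)ᵀ (0,α)ᵀ ≡ 0 (mod p)`. -/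
theorem qWalkMod_rootedProd_two (n : ℕ) (G : SimpleGraph (Fin n)) (p : ℕ) (hp : p.Prime)
    (α : Fin n → ℤ) (hα : ∀ j, (p : ℤ) ∣ ((qWalkMod G)ᵀ *ᵥ α) j) :
    (∀ j, (p : ℤ) ∣ ((qWalkMod (rootedProd G 2))ᵀ *ᵥ
        (fun v : Fin n × Fin 2 => if (v.2 : ℕ) = 0 then α v.1 else 0)) j) ∧
    (∀ j, (p : ℤ) ∣ ((qWalkMod (rootedProd G 2))ᵀ *ᵥ
        (fun v : Fin n × Fin 2 => if (v.2 : ℕ) = 1 then α v.1 else 0)) j) := by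
  classical
  have hcol : ∀ j < Fintype.card (Fin n), (p : ℤ) ∣ qWalkVec G j ⬝ᵥ α := fun j hj => by
    simpa [qWalkMod_transpose_mulVec] using hα ⟨j, hj⟩
  have hslice := dvd_qWalkVec_rootedProd_two_slice_dotProduct hp hcol
  refine ⟨fun j => ?_, fun j => ?_⟩
  · simp_rw [qWalkMod_transpose_mulVec, Fin.val_eq_zero_iff, dotProduct_ite_snd_eq]
    exact hslice j 0
  · have hval_one : ∀ i : Fin 2, (i : ℕ) = 1 ↔ i = 1 := by decide
    simp_rw [qWalkMod_transpose_mulVec, hval_one, dotProduct_ite_snd_eq]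
    exact hslice j 1
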